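/- For t > 0, x ∈ ℝ \ {0}, z ∈ ℂ, ω ∈ ℝ, the function G₁(t,x,z) = Λ((|x|+z)/(2√(it)) + ω√(it)) e^{-(|x|+z)²/(4it)} satisfies the free Schrödinger equation i ∂_t G₁ = -∂²_x G₁, using Λ'(w) = 2wΛ(w) - 2/√π. -/

import Mathlib

open MeasureTheory intervalIntegral Set Filter Topology

/-- The complex error function: path integral of `e^{-ξ²}` from `0` to `z`
along the straight line, times `2/√π`. -/
noncomputable def cerf (z : ℂ) : ℂ :=
  (2 / (Real.sqrt Real.pi : ℂ)) * ∫ s in (0:ℝ)..1, z * Complex.exp (-((s : ℂ) * z)^2)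

/-- `Λ(z) = e^{z²}(1 - erf z)`. -/
noncomputable def Lam (z : ℂ) : ℂ := Complex.exp (z^2) * (1 - cerf z)
/-- `√(it) = e^{iπ/4}√t` for `t > 0`. -/
noncomputable def sqit (t : ℝ) : ℂ :=
  Complex.exp (Real.pi / 4 * Complex.I) * (Real.sqrt t : ℂ)

/-- `√(iπt) = e^{iπ/4}√(πt)` for `t > 0`. -/
noncomputable def sqipt (t : ℝ) : ℂ :=
  Complex.exp (Real.pi / 4 * Complex.I) * (Real.sqrt (Real.pi * t) : ℂ)

/-- The free Schrödinger kernel. -/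
noncomputable def Gfree (t x : ℝ) (z : ℂ) : ℂ :=
  (2 * sqipt t)⁻¹ * Complex.exp (-((x : ℂ) - z)^2 / (4 * Complex.I * (t : ℂ)))

/-- The kernel `G₀`. -/
noncomputable def G0 (t x : ℝ) (z : ℂ) : ℂ :=
  (2 * sqipt t)⁻¹ * Complex.exp (-(((|x| : ℝ) : ℂ) + z)^2 / (4 * Complex.I * (t : ℂ)))

/-- The kernel `G₁` with parameter `ω`. -/
noncomputable def G1 (ω : ℝ) (t x : ℝ) (z : ℂ) : ℂ :=
  Lam ((((|x| : ℝ) : ℂ) + z) / (2 * sqit t) + (ω : ℂ) * sqit t) *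
    Complex.exp (-(((|x| : ℝ) : ℂ) + z)^2 / (4 * Complex.I * (t : ℂ)))

/-!
Write `σ = sqit t`, so that `σ² = it`, and `u = |x| + z`, `w = u/(2σ) + ωσ`. Completing the square,
`w² - u²/(4it) = ωu + iω²t`, so `G₁ = e^{ωu + iω²t} erfc w`. Since `cerf` is the segment integral
of the entire function `(2/√π) e^{-ξ²}`, it is a primitive of it, and `erfc' w = -(2/√π) e^{-w²}`;
the same completed square turns every `e^{ωu + iω²t} e^{-w²}` produced by differentiation back
into the chirp `e^{-u²/(4it)}`. Both sides of the equation are then explicit combinations of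
`G₁` and the chirp, and they agree because `σ² = it`. Away from `x = 0`, `|x|` is locally `±x`,
so `∂²ₓ` acts on `G₁` as the second complex derivative in `u`.
-/

open Complex

theorem Complex.integral_segment_eq_sub_of_hasDerivAt {f F : ℂ → ℂ}
    (hF : ∀ w, HasDerivAt F (f w) w) (hf : Continuous f) (z : ℂ) :
    ∫ s in (0:ℝ)..1, z * f (s * z) = F z - F 0 := by
  have hderiv (s : ℝ) : HasDerivAt (fun s : ℝ => F (s * z)) (z * f (s * z)) s := by
    have := (hF _).comp (s : ℂ) ((hasDerivAt_id (s : ℂ)).mul_const z)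
    simpa [mul_comm] using this.comp_ofReal
  have hcont : Continuous fun s : ℝ => z * f (s * z) := by fun_prop
  rw [integral_eq_sub_of_hasDerivAt (fun s _ => hderiv s) (hcont.intervalIntegrable 0 1)]
  simp

theorem hasDerivAt_cerf (z : ℂ) :
    HasDerivAt cerf (2 / (√Real.pi : ℂ) * exp (-z ^ 2)) z := by
  have hdiff : Differentiable ℂ fun w : ℂ => exp (-w ^ 2) := by fun_prop
  obtain ⟨F, hF⟩ := hdiff.isExactOn_univ
  have hcerf : cerf = fun w => 2 / (√Real.pi : ℂ) * (F w - F 0) := by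
    ext w
    rw [cerf, ← integral_segment_eq_sub_of_hasDerivAt (fun w => hF w trivial)
      hdiff.continuous]
  rw [hcerf]
  exact ((hF z trivial).sub_const _).const_mul _

theorem hasDerivAt_comp_ofReal_mul_add {g : ℂ → ℂ} (hg : Differentiable ℂ g)
    (ε : ℝ) (z : ℂ) (ξ : ℝ) :
    HasDerivAt (fun ξ : ℝ => g (ε * ξ + z)) (ε * deriv g (ε * ξ + z)) ξ := by
  have h := (hg _).hasDerivAt.comp (ξ : ℂ)
    (((hasDerivAt_id (ξ : ℂ)).const_mul (ε : ℂ)).add_const z)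
  simpa [mul_comm] using h.comp_ofReal

theorem deriv_deriv_comp_abs_add {g : ℂ → ℂ} (hg : Differentiable ℂ g)
    (hg' : Differentiable ℂ (deriv g)) (z : ℂ) {x : ℝ} (hx : x ≠ 0) :
    deriv (fun ξ : ℝ => deriv (fun ξ' : ℝ => g (|ξ'| + z)) ξ) x = deriv (deriv g) (|x| + z) := by
  obtain ⟨ε, hε, habs⟩ : ∃ ε : ℝ, ε * ε = 1 ∧ ∀ᶠ ξ in 𝓝 x, |ξ| = ε * ξ := by
    rcases hx.lt_or_gt with hneg | hpos
    · exact ⟨-1, by norm_num, eventually_of_mem (Iio_mem_nhds hneg) fun ξ (hξ : ξ < 0) => by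
        rw [abs_of_neg hξ]; ring⟩
    · exact ⟨1, by norm_num, eventually_of_mem (Ioi_mem_nhds hpos) fun ξ (hξ : 0 < ξ) => by
        rw [abs_of_pos hξ]; ring⟩
  have hinner : deriv (fun ξ' : ℝ => g (|ξ'| + z)) =ᶠ[𝓝 x]
      fun ξ => ε * deriv g (ε * ξ + z) := by
    filter_upwards [habs.eventually_nhds] with ξ hξ
    refine ((hasDerivAt_comp_ofReal_mul_add hg ε z ξ).congr_of_eventuallyEq ?_).deriv
    filter_upwards [hξ] with ξ' hξ'
    rw [hξ']
    push_cast
    rfl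
  rw [hinner.deriv_eq, ((hasDerivAt_comp_ofReal_mul_add hg' ε z x).const_mul (ε : ℂ)).deriv,
    ← mul_assoc, ← ofReal_mul, hε, habs.self_of_nhds]
  push_cast
  ring

theorem sqit_sq {t : ℝ} (ht : 0 ≤ t) : sqit t ^ 2 = I * t := by
  rw [sqit, mul_pow, ← exp_nat_mul, ← ofReal_pow, Real.sq_sqrt ht]
  have : ((2 : ℕ) : ℂ) * (Real.pi / 4 * I) = (Real.pi / 2 : ℝ) * I := by
    push_cast; ring
  rw [this, exp_mul_I, ← ofReal_cos, ← ofReal_sin,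
    Real.cos_pi_div_two, Real.sin_pi_div_two]
  simp

theorem sqit_ne_zero {t : ℝ} (ht : 0 < t) : sqit t ≠ 0 :=
  mul_ne_zero (exp_ne_zero _) (ofReal_ne_zero.mpr (Real.sqrt_pos.mpr ht).ne')

theorem hasDerivAt_sqit {t : ℝ} (ht : 0 < t) : HasDerivAt sqit (sqit t / (2 * t)) t := by
  have h : HasDerivAt sqit _ t := ((Real.hasDerivAt_sqrt ht.ne').ofReal_comp).const_mul
    (exp (Real.pi / 4 * I))
  refine h.congr_deriv ?_
  have hst : (√t : ℂ) ^ 2 = t := by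
    rw [← ofReal_pow, Real.sq_sqrt ht.le]
  unfold sqit
  push_cast
  rw [← hst]
  field_simp

noncomputable def chirp (t : ℝ) (u : ℂ) : ℂ := exp (-u ^ 2 / (4 * I * t))

theorem hasDerivAt_chirp (t : ℝ) (u : ℂ) :
    HasDerivAt (chirp t) (-u / (2 * I * t) * chirp t u) u := by
  have h : HasDerivAt (chirp t) _ u := ((hasDerivAt_pow 2 u).neg.div_const (4 * I * t)).cexp
  refine h.congr_deriv ?_
  simp only [chirp, Pi.neg_apply]
  ring

noncomputable def erfcWave (ω t : ℝ) (u : ℂ) : ℂ :=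
  exp (ω * u + I * ω ^ 2 * t) * (1 - cerf (u / (2 * sqit t) + ω * sqit t))

theorem exp_mul_exp_neg_sq_sqit (ω : ℝ) {t : ℝ} (ht : 0 < t) (u : ℂ) :
    exp (ω * u + I * ω ^ 2 * t) * exp (-(u / (2 * sqit t) + ω * sqit t) ^ 2) =
      exp (-u ^ 2 / (4 * I * t)) := by
  have hσ := sqit_ne_zero ht
  rw [← exp_add]
  congr 1
  have : (u / (2 * sqit t) + ω * sqit t) ^ 2 =
      u ^ 2 / (4 * sqit t ^ 2) + ω * u + ω ^ 2 * sqit t ^ 2 := by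
    field_simp
    ring
  rw [this, sqit_sq ht.le]
  field_simp
  ring

theorem G1_eq_erfcWave (ω : ℝ) {t : ℝ} (ht : 0 < t) (x : ℝ) (z : ℂ) :
    G1 ω t x z = erfcWave ω t (|x| + z) := by
  rw [G1, Lam, erfcWave, ← exp_mul_exp_neg_sq_sqit ω ht]
  set w := (((|x| : ℝ) : ℂ) + z) / (2 * sqit t) + ω * sqit t
  have : exp (w ^ 2) * exp (-w ^ 2) = 1 := by rw [← exp_add, add_neg_cancel, exp_zero]
  linear_combination exp (ω * (((|x| : ℝ) : ℂ) + z) + I * ω ^ 2 * t) * (1 - cerf w) * this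

theorem hasDerivAt_erfcWave (ω : ℝ) {t : ℝ} (ht : 0 < t) (u : ℂ) :
    HasDerivAt (erfcWave ω t)
      (ω * erfcWave ω t u - 2 / (√Real.pi : ℂ) / (2 * sqit t) * chirp t u) u := by
  have hE := (((hasDerivAt_id' u).const_mul (ω : ℂ)).add_const (I * ω ^ 2 * t)).cexp
  have hw := ((hasDerivAt_id' u).div_const (2 * sqit t)).add_const (ω * sqit t)
  have hC := ((hasDerivAt_cerf _).comp u hw).const_sub 1
  refine (hE.mul hC : HasDerivAt (erfcWave ω t) _ u).congr_deriv ?_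
  rw [erfcWave, chirp, ← exp_mul_exp_neg_sq_sqit ω ht u]
  ring

theorem hasDerivAt_erfcWave_time (ω : ℝ) {t : ℝ} (ht : 0 < t) (u : ℂ) :
    HasDerivAt (fun τ => erfcWave ω τ u)
      (I * ω ^ 2 * erfcWave ω t u -
        2 / (√Real.pi : ℂ) * chirp t u * ((ω * sqit t - u / (2 * sqit t)) / (2 * t))) t := by
  have hσ := sqit_ne_zero ht
  have hE := (((hasDerivAt_id' (t : ℂ)).const_mul (I * ω ^ 2)).const_add (ω * u)).cexp.comp_ofReal
  have hw : HasDerivAt (fun τ : ℝ => u / (2 * sqit τ) + ω * sqit τ) _ t :=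
    ((hasDerivAt_const t u).div ((hasDerivAt_sqit ht).const_mul 2)
      (mul_ne_zero two_ne_zero hσ)).add ((hasDerivAt_sqit ht).const_mul (ω : ℂ))
  have hC := ((hasDerivAt_cerf _).comp t hw).const_sub 1
  refine (hE.mul hC : HasDerivAt (fun τ => erfcWave ω τ u) _ t).congr_deriv ?_
  rw [erfcWave, chirp, ← exp_mul_exp_neg_sq_sqit ω ht u]
  field_simp
  ring

theorem deriv_erfcWave (ω : ℝ) {t : ℝ} (ht : 0 < t) :
    deriv (erfcWave ω t) =
      fun u => ω * erfcWave ω t u - 2 / (√Real.pi : ℂ) / (2 * sqit t) * chirp t u :=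
  funext fun u => (hasDerivAt_erfcWave ω ht u).deriv

theorem differentiable_erfcWave (ω : ℝ) {t : ℝ} (ht : 0 < t) : Differentiable ℂ (erfcWave ω t) :=
  fun u => (hasDerivAt_erfcWave ω ht u).differentiableAt

theorem differentiable_deriv_erfcWave (ω : ℝ) {t : ℝ} (ht : 0 < t) :
    Differentiable ℂ (deriv (erfcWave ω t)) := by
  rw [deriv_erfcWave ω ht]
  exact ((differentiable_erfcWave ω ht).const_mul _).sub
    (.const_mul (fun u => (hasDerivAt_chirp t u).differentiableAt) _)

theorem erfcWave_schrodinger (ω : ℝ) {t : ℝ} (ht : 0 < t) (u : ℂ) :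
    I * deriv (fun τ => erfcWave ω τ u) t = -deriv (deriv (erfcWave ω t)) u := by
  have hσ := sqit_ne_zero ht
  have ht' : (t : ℂ) ≠ 0 := ofReal_ne_zero.mpr ht.ne'
  have hspace := ((hasDerivAt_erfcWave ω ht u).const_mul (ω : ℂ)).fun_sub
      ((hasDerivAt_chirp t u).const_mul (2 / (√Real.pi : ℂ) / (2 * sqit t)))
  rw [(hasDerivAt_erfcWave_time ω ht u).deriv, deriv_erfcWave ω ht, hspace.deriv]
  field_simp
  rw [I_sq]
  linear_combination 2 * ω * chirp t u * sqit_sq ht.le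

theorem G1_schrodinger (ω t x : ℝ) (ht : 0 < t) (hx : x ≠ 0) (z : ℂ) :
    Complex.I * deriv (fun τ : ℝ => G1 ω τ x z) t =
      -deriv (fun ξ : ℝ => deriv (fun ξ' : ℝ => G1 ω t ξ' z) ξ) x := by
  have htime : (fun τ => G1 ω τ x z) =ᶠ[𝓝 t] fun τ => erfcWave ω τ (|x| + z) :=
    eventually_of_mem (Ioi_mem_nhds ht) fun τ hτ => G1_eq_erfcWave ω hτ x z
  have hspace : (fun ξ : ℝ => G1 ω t ξ z) = fun ξ : ℝ => erfcWave ω t (|ξ| + z) :=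
    funext fun ξ => G1_eq_erfcWave ω ht ξ z
  rw [htime.deriv_eq, hspace, deriv_deriv_comp_abs_add (differentiable_erfcWave ω ht)
    (differentiable_deriv_erfcWave ω ht) z hx]
  exact erfcWave_schrodinger ω ht _
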